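/- Let a : ℕ × ℕ → ℚ(q) be any doubly indexed sequence satisfying the recurrence a_{n+1, m} = [m]_q · a_{n, m} − [m+1]_q · a_{n, m+1} for all n, m ≥ 0. Then for every n ≥ 0, a_{n, 0} = ∑_{m=0}^{n} (−1)^m · [m]!_q · {n brace m}_q · a_{0, m}. -/

import Mathlib

open Finset

/-- The q-integer `[n]_q = 1 + q + ⋯ + q^(n-1)`. -/
def qInt {R : Type*} [CommSemiring R] (q : R) (n : ℕ) : R :=
  ∑ i ∈ Finset.range n, q ^ i

/-- The q-factorial `[n]!_q = [1]_q [2]_q ⋯ [n]_q`. -/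
def qFact {R : Type*} [CommSemiring R] (q : R) (n : ℕ) : R :=
  ∏ i ∈ Finset.range n, qInt q (i + 1)

/-- The Carlitz q-Stirling numbers of the second kind. -/
def qStirling {R : Type*} [CommSemiring R] (q : R) : ℕ → ℕ → R
  | 0, 0 => 1
  | 0, _ + 1 => 0
  | _ + 1, 0 => 0
  | n + 1, m + 1 => qStirling q n m + qInt q (m + 1) * qStirling q n (m + 1)

/-!
Induct on `k` for all arrays at once: the claim for the shifted array `a_{n+1,·}` gives
`a_{k+1,0} = ∑ₘ c_{k,m} a_{1,m}` with `c_{k,m} = (-1)^m [m]! {k brace m}`. Substituting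
`a_{1,m} = [m] a_{0,m} - [m+1] a_{0,m+1}` and shifting the index, `a_{0,m+1}` gets the coefficient
`[m+1] (c_{k,m+1} - c_{k,m})`, which is `c_{k+1,m+1}`: this is the Stirling recurrence multiplied by
`(-1)^(m+1) [m+1]!`.
-/

section CommSemiring

variable {R : Type*} [CommSemiring R] (q : R)

lemma qInt_zero : qInt q 0 = 0 := by
  simp [qInt]

lemma qFact_succ (m : ℕ) : qFact q (m + 1) = qFact q m * qInt q (m + 1) :=
  prod_range_succ _ _

lemma qStirling_eq_zero_of_lt {n m : ℕ} (h : n < m) : qStirling q n m = 0 := by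
  induction n generalizing m with
  | zero => obtain ⟨m, rfl⟩ := Nat.exists_eq_succ_of_ne_zero h.ne'; rfl
  | succ n ih =>
    obtain ⟨m, rfl⟩ := Nat.exists_eq_succ_of_ne_zero (Nat.zero_lt_of_lt h).ne'
    simp only [qStirling, ih (Nat.lt_of_succ_lt_succ h), ih (Nat.lt_of_succ_lt h), mul_zero,
      add_zero]

end CommSemiring

section CommRing

variable {R : Type*} [CommRing R] (q : R)

def qAkiyamaTanigawaStep (b : ℕ → R) (m : ℕ) : R :=
  qInt q m * b m - qInt q (m + 1) * b (m + 1)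

def qAkiyamaTanigawaCoeff (k m : ℕ) : R :=
  (-1) ^ m * qFact q m * qStirling q k m

local notation "c" => qAkiyamaTanigawaCoeff q

lemma qAkiyamaTanigawaCoeff_succ_zero (k : ℕ) : c (k + 1) 0 = 0 := by
  simp [qAkiyamaTanigawaCoeff, qStirling]

lemma qAkiyamaTanigawaCoeff_succ_succ (k m : ℕ) :
    c (k + 1) (m + 1) = qInt q (m + 1) * (c k (m + 1) - c k m) := by
  simp only [qAkiyamaTanigawaCoeff, qStirling, qFact_succ, pow_succ]
  ring

lemma qAkiyamaTanigawaCoeff_eq_zero_of_lt {k m : ℕ} (h : k < m) : c k m = 0 := by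
  simp [qAkiyamaTanigawaCoeff, qStirling_eq_zero_of_lt q h]

lemma sum_qAkiyamaTanigawaCoeff_mul_step (k : ℕ) (b : ℕ → R) :
    ∑ m ∈ range (k + 1), c k m * qAkiyamaTanigawaStep q b m
      = ∑ m ∈ range (k + 2), c (k + 1) m * b m := by
  have hshift : ∑ m ∈ range (k + 1), c k m * (qInt q m * b m)
      = ∑ m ∈ range (k + 1), c k (m + 1) * (qInt q (m + 1) * b (m + 1)) := by
    rw [sum_range_succ', sum_range_succ _ k,
      qAkiyamaTanigawaCoeff_eq_zero_of_lt q (Nat.lt_succ_self k), qInt_zero]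
    simp
  rw [sum_range_succ' _ (k + 1), qAkiyamaTanigawaCoeff_succ_zero, zero_mul, add_zero]
  simp only [qAkiyamaTanigawaStep, mul_sub]
  rw [sum_sub_distrib, hshift, ← sum_sub_distrib]
  refine sum_congr rfl fun m _ => ?_
  rw [qAkiyamaTanigawaCoeff_succ_succ]
  ring

theorem qAkiyamaTanigawa_B_of_commRing (a : ℕ → ℕ → R)
    (hrec : ∀ n m : ℕ, a (n + 1) m = qInt q m * a n m - qInt q (m + 1) * a n (m + 1))
    (k : ℕ) : a k 0 = ∑ m ∈ range (k + 1), c k m * a 0 m := by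
  induction k generalizing a with
  | zero => simp [qAkiyamaTanigawaCoeff, qFact, qStirling]
  | succ k ih =>
    have hrow : a 1 = qAkiyamaTanigawaStep q (a 0) := funext (hrec 0)
    rw [ih (fun n => a (n + 1)) fun n => hrec (n + 1), hrow,
      sum_qAkiyamaTanigawaCoeff_mul_step]

end CommRing

/-- Variant B of the q-Akiyama–Tanigawa algorithm (Zeng): if
`a_{n+1,m} = [m]_q a_{n,m} - [m+1]_q a_{n,m+1}` for all `n, m ≥ 0`, then
`a_{n,0} = ∑_{m=0}^n (-1)^m [m]!_q {n brace m}_q a_{0,m}`. -/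
theorem qAkiyamaTanigawa_B (a : ℕ → ℕ → RatFunc ℚ)
    (hrec : ∀ n m : ℕ,
      a (n + 1) m = qInt (RatFunc.X : RatFunc ℚ) m * a n m
        - qInt (RatFunc.X : RatFunc ℚ) (m + 1) * a n (m + 1)) :
    ∀ n : ℕ, a n 0
      = ∑ m ∈ Finset.range (n + 1),
          (-1 : RatFunc ℚ) ^ m * qFact (RatFunc.X : RatFunc ℚ) m *
            qStirling (RatFunc.X : RatFunc ℚ) n m * a 0 m :=
  qAkiyamaTanigawa_B_of_commRing RatFunc.X a hrec
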